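/- arXiv:2402.11336 — 3 statements merged into one kernel-verified Lean document; each statement's English description precedes it below -/
import Mathlib

section
/- Partition the covariates as x = (x^(r), x^(s)) with k_r remaining and k_s special covariates. Suppose the rows (x_i^(r), x_i^(s)) are i.i.d. and conditionally ellipsoidally symmetric in canonical form, in the sense that for every orthogonal k_r×k_r matrix Q, the pair (x_i^(r)·Q, x_i^(s)) is identically distributed as (x_i^(r), x_i^(s)). Suppose W is uniformly distributed on 𝒲 = {w ∈ {0,1}^n : Σ_i w_i = n₁} and independent of x, and φ(x, W) ∈ [0,1] is a measurable stochastic balance criterion that is conditionally affinely invariant on x^(r) given x^(s), i.e., φ((x^(r)A + 1bᵀ, x^(s)), W) = φ((x^(r), x^(s)), W) for every invertible k_r×k_r matrix A and b ∈ ℝ^{k_r}, with E[φ(x,W)] > 0. Let D_r = x̄₁^(r) − x̄₀^(r) and D_s = x̄₁^(s) − x̄₀^(s) be the differences in group means of remaining and special covariates, all coordinates integrable together with φ as required. Then: (1) E[D_r | δ=1] := E[D_r·φ]/E[φ] = 0 and E[D_r] = 0; (2) E[D_sᵀ·D_r | δ=1] := E[D_sᵀ·D_r·φ]/E[φ] =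 0 (as a k_s×k_r matrix); (3) there exists c ≥ 0 such that the conditional covariance matrix of D_r given acceptance, E[D_rᵀ·D_r·φ]/E[φ], equals c·I_{k_r}. -/
open MeasureTheory ProbabilityTheory Matrix

/-- Difference in treatment (`w i = true`) and control (`w i = false`) group means of the
covariates `ξ`, where the treatment group has `n₁` units out of `n`. -/
noncomputable def diffMeans {n k : ℕ} (n₁ : ℕ) (ξ : Fin n → Fin k → ℝ)
    (w : Fin n → Bool) : Fin k → ℝ :=
  fun j => ((n₁ : ℝ))⁻¹ * ∑ i ∈ Finset.univ.filter (fun i => w i = true), ξ i j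
    - (((n - n₁ : ℕ) : ℝ))⁻¹ * ∑ i ∈ Finset.univ.filter (fun i => w i = false), ξ i j


lemma diffMeans_vecMul {n k : ℕ} (n₁ : ℕ) (ξ : Fin n → Fin k → ℝ) (w : Fin n → Bool)
    (Q : Matrix (Fin k) (Fin k) ℝ) :
    diffMeans n₁ (fun i => ξ i ᵥ* Q) w = diffMeans n₁ ξ w ᵥ* Q := by
  funext a
  simp only [diffMeans, vecMul, dotProduct]
  have h1 : ∀ (S : Finset (Fin n)), ∑ i ∈ S, ∑ j, ξ i j * Q j a
      = ∑ j, (∑ i ∈ S, ξ i j) * Q j a := by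
    intro S; rw [Finset.sum_comm]; simp [Finset.sum_mul]
  rw [h1, h1, Finset.mul_sum, Finset.mul_sum, ← Finset.sum_sub_distrib]
  exact Finset.sum_congr rfl fun j _ => by ring

lemma iid_map_eq_pi {Ω : Type*} [MeasurableSpace Ω] (P : Measure Ω) [IsProbabilityMeasure P]
    {n : ℕ} {E : Type*} [MeasurableSpace E] (Y : Ω → Fin n → E)
    (hY : ∀ i, Measurable fun ω => Y ω i)
    (hiid : iIndepFun (fun i ω => Y ω i) P) :
    Measure.map Y P = Measure.pi (fun i => Measure.map (fun ω => Y ω i) P) := by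
  have hYm : Measurable Y := measurable_pi_iff.mpr hY
  haveI : ∀ i, IsProbabilityMeasure (Measure.map (fun ω => Y ω i) P) :=
    fun i => Measure.isProbabilityMeasure_map (hY i).aemeasurable
  haveI : ∀ i, SigmaFinite (Measure.map (fun ω => Y ω i) P) := fun i => inferInstance
  refine (Measure.pi_eq (μ := fun i => Measure.map (fun ω => Y ω i) P) fun s hs => ?_).symm
  rw [Measure.map_apply hYm (MeasurableSet.univ_pi hs)]
  have hpre : Y ⁻¹' (Set.univ.pi s) = ⋂ i ∈ Finset.univ, (fun ω => Y ω i) ⁻¹' s i := by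
    ext ω; simp [Set.mem_pi]
  rw [hpre, hiid.measure_inter_preimage_eq_mul Finset.univ (fun i _ => hs i)]
  exact Finset.prod_congr rfl fun i _ => (Measure.map_apply (hY i) (hs i)).symm

lemma measurable_vecMul_right {k m : ℕ} (Q : Matrix (Fin k) (Fin m) ℝ) :
    Measurable fun v : Fin k → ℝ => v ᵥ* Q := by
  refine measurable_pi_iff.mpr fun j => ?_
  simp only [vecMul, dotProduct]
  exact Finset.measurable_sum _ fun i _ => (measurable_pi_apply i).mul_const _

noncomputable def permMat {k : ℕ} (σ : Equiv.Perm (Fin k)) : Matrix (Fin k) (Fin k) ℝ :=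
  Matrix.of fun i j => if σ i = j then 1 else 0

lemma permMat_orth {k : ℕ} (σ : Equiv.Perm (Fin k)) : permMat σ * (permMat σ)ᵀ = 1 := by
  ext i j
  simp only [permMat, Matrix.mul_apply, Matrix.transpose_apply, Matrix.of_apply,
    Matrix.one_apply, ite_mul, one_mul, zero_mul]
  rw [Finset.sum_ite_eq Finset.univ (σ i) (fun kk => if σ j = kk then (1:ℝ) else 0)]
  simp [EmbeddingLike.apply_eq_iff_eq, eq_comm]

lemma vecMul_permMat {k : ℕ} (σ : Equiv.Perm (Fin k)) (v : Fin k → ℝ) (j : Fin k) :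
    (v ᵥ* permMat σ) j = v (σ.symm j) := by
  simp [permMat, vecMul, dotProduct, mul_ite, Equiv.apply_eq_iff_eq_symm_apply,
    Finset.sum_ite_eq']

lemma flipMat_orth {k : ℕ} (a : Fin k) :
    Matrix.diagonal (fun j => if j = a then (-1:ℝ) else 1)
      * (Matrix.diagonal (fun j => if j = a then (-1:ℝ) else 1))ᵀ = 1 := by
  rw [Matrix.diagonal_transpose, Matrix.diagonal_mul_diagonal]
  convert Matrix.diagonal_one using 2
  funext j
  by_cases h : j = a <;> simp [h]

lemma measurable_diffMeans_app {n k : ℕ} (n₁ : ℕ) {α : Type*} [MeasurableSpace α]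
    (g : α → Fin n → Fin k → ℝ) (hg : Measurable g) (a : Fin k) :
    Measurable fun p : α × (Fin n → Bool) => diffMeans n₁ (g p.1) p.2 a := by
  apply measurable_from_prod_countable_left
  intro w
  simp only [diffMeans]
  have hsum : ∀ S : Finset (Fin n), Measurable fun x : α => ∑ i ∈ S, g x i a := by
    intro S
    refine Finset.measurable_sum S fun i _ => ?_
    exact (measurable_pi_apply a).comp ((measurable_pi_apply i).comp hg)
  apply Measurable.sub
  · exact (hsum (Finset.filter (fun i => w i = true) Finset.univ)).const_mul (((n₁ : ℕ) : ℝ))⁻¹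
  · exact (hsum (Finset.filter (fun i => w i = false) Finset.univ)).const_mul
      (((n - n₁ : ℕ) : ℝ))⁻¹

/-- conditionally affinely invariant rerandomization over conditionally
ellipsoidally symmetric covariates in canonical form: given acceptance (`δ = 1`, with
`E[h ∣ δ=1] = E[h·φ]/E[φ]`), the difference in remaining-covariate means is centered,
uncorrelated with the special-covariate means, and has conditional covariance
proportional to the identity. -/
theorem stmt_2 {Ω : Type*} [MeasurableSpace Ω] (P : Measure Ω) [IsProbabilityMeasure P]
    {n kr ks : ℕ} (n₁ : ℕ) (hn₁ : 1 ≤ n₁) (hn₁n : n₁ < n)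
    (xr : Ω → Fin n → Fin kr → ℝ) (xs : Ω → Fin n → Fin ks → ℝ)
    (hxrmeas : Measurable xr) (hxsmeas : Measurable xs)
    -- the rows `(x_i^{(r)}, x_i^{(s)})` are i.i.d. …
    (hiid : iIndepFun
      (fun i ω => (xr ω i, xs ω i)) P)
    (hident : ∀ i i', Measure.map (fun ω => (xr ω i, xs ω i)) P
      = Measure.map (fun ω => (xr ω i', xs ω i')) P)
    -- … and conditionally ellipsoidally symmetric in canonical form:
    -- `(x_i^{(r)}·Q, x_i^{(s)})` is distributed as `(x_i^{(r)}, x_i^{(s)})` for orthogonal `Q`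
    (hcanon : ∀ Q : Matrix (Fin kr) (Fin kr) ℝ, Q * Qᵀ = 1 → ∀ i,
      Measure.map (fun ω => (xr ω i ᵥ* Q, xs ω i)) P
        = Measure.map (fun ω => (xr ω i, xs ω i)) P)
    -- `W` is uniformly distributed on `𝒲 = {w : ∑ᵢ wᵢ = n₁}` and independent of `x`
    (W : Ω → Fin n → Bool) (hWmeas : Measurable W)
    (hWunif : Measure.map W P = uniformOn
      {w : Fin n → Bool | (Finset.univ.filter fun i => w i = true).card = n₁})
    (hindep : IndepFun (fun ω => (xr ω, xs ω)) W P)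
    -- `φ` is a measurable `[0,1]`-valued stochastic balance criterion,
    -- conditionally affinely invariant on `x^{(r)}` given `x^{(s)}`
    (φ : (Fin n → Fin kr → ℝ) → (Fin n → Fin ks → ℝ) → (Fin n → Bool) → ℝ)
    (hφmeas : Measurable fun q : (Fin n → Fin kr → ℝ) × (Fin n → Fin ks → ℝ) × (Fin n → Bool)
      => φ q.1 q.2.1 q.2.2)
    (hφ01 : ∀ ξr ξs w, φ ξr ξs w ∈ Set.Icc (0 : ℝ) 1)
    (hφaff : ∀ (A : Matrix (Fin kr) (Fin kr) ℝ), IsUnit A → ∀ (b : Fin kr → ℝ) ξr ξs w,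
      φ (fun i => ξr i ᵥ* A + b) ξs w = φ ξr ξs w)
    -- acceptance has positive probability: `E[φ] > 0`
    (hacc : 0 < ∫ ω, φ (xr ω) (xs ω) (W ω) ∂P)
    -- differences in group means of remaining and special covariates
    (Dr : Ω → Fin kr → ℝ) (hDr : ∀ ω, Dr ω = diffMeans n₁ (xr ω) (W ω))
    (Ds : Ω → Fin ks → ℝ) (hDs : ∀ ω, Ds ω = diffMeans n₁ (xs ω) (W ω)) :
    (∀ a, (∫ ω, Dr ω a * φ (xr ω) (xs ω) (W ω) ∂P) / (∫ ω, φ (xr ω) (xs ω) (W ω) ∂P) = 0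
      ∧ ∫ ω, Dr ω a ∂P = 0) ∧
    (∀ b a, (∫ ω, Ds ω b * Dr ω a * φ (xr ω) (xs ω) (W ω) ∂P)
      / (∫ ω, φ (xr ω) (xs ω) (W ω) ∂P) = 0) ∧
    (∃ c : ℝ, 0 ≤ c ∧ ∀ a b,
      (∫ ω, Dr ω a * Dr ω b * φ (xr ω) (xs ω) (W ω) ∂P)
        / (∫ ω, φ (xr ω) (xs ω) (W ω) ∂P) = if a = b then c else 0) := by
  classical
  have hYi : ∀ i, Measurable fun ω => (xr ω i, xs ω i) := fun i =>
    ((measurable_pi_apply i).comp hxrmeas).prodMk ((measurable_pi_apply i).comp hxsmeas)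
  have hYmeas : Measurable (fun ω (i : Fin n) => (xr ω i, xs ω i)) := measurable_pi_iff.mpr hYi
  have hpi := iid_map_eq_pi P (fun ω i => (xr ω i, xs ω i)) hYi hiid
  beta_reduce at hpi
  have hXmeas : Measurable (fun ω => (xr ω, xs ω)) := hxrmeas.prodMk hxsmeas
  have key : ∀ Q : Matrix (Fin kr) (Fin kr) ℝ, Q * Qᵀ = 1 →
      ∀ F : ((Fin n → Fin kr → ℝ) × (Fin n → Fin ks → ℝ)) × (Fin n → Bool) → ℝ,
      Measurable F →
      ∫ ω, F (((fun i => xr ω i ᵥ* Q), xs ω), W ω) ∂P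
        = ∫ ω, F ((xr ω, xs ω), W ω) ∂P := by
    intro Q hQ F hF
    have hgmeas : Measurable (fun p : (Fin kr → ℝ) × (Fin ks → ℝ) => (p.1 ᵥ* Q, p.2)) :=
      ((measurable_vecMul_right Q).comp measurable_fst).prodMk measurable_snd
    haveI : ∀ i : Fin n, IsProbabilityMeasure (Measure.map (fun ω => (xr ω i, xs ω i)) P) :=
      fun i => Measure.isProbabilityMeasure_map (hYi i).aemeasurable
    have hgpres : ∀ i : Fin n, MeasurePreserving
        (fun p : (Fin kr → ℝ) × (Fin ks → ℝ) => (p.1 ᵥ* Q, p.2))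
        (Measure.map (fun ω => (xr ω i, xs ω i)) P)
        (Measure.map (fun ω => (xr ω i, xs ω i)) P) := by
      intro i
      refine ⟨hgmeas, ?_⟩
      rw [Measure.map_map hgmeas (hYi i)]
      exact hcanon Q hQ i
    have hTQ := measurePreserving_pi _ _ hgpres
    have hXQ'meas : Measurable (fun ω (i : Fin n) => (xr ω i ᵥ* Q, xs ω i)) :=
      hTQ.measurable.comp hYmeas
    have hmapTQ : Measure.map (fun ω (i : Fin n) => (xr ω i ᵥ* Q, xs ω i)) P
        = Measure.map (fun ω (i : Fin n) => (xr ω i, xs ω i)) P := by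
      have he : (fun ω (i : Fin n) => (xr ω i ᵥ* Q, xs ω i))
          = (fun (f : Fin n → (Fin kr → ℝ) × (Fin ks → ℝ)) i => ((f i).1 ᵥ* Q, (f i).2))
            ∘ (fun ω i => (xr ω i, xs ω i)) := rfl
      rw [he, ← Measure.map_map hTQ.measurable hYmeas, hpi, hTQ.map_eq]
    have humeas : Measurable (fun f : Fin n → (Fin kr → ℝ) × (Fin ks → ℝ) =>
        ((fun i => (f i).1), (fun i => (f i).2))) :=
      (measurable_pi_iff.mpr fun i => measurable_fst.comp (measurable_pi_apply i)).prodMk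
        (measurable_pi_iff.mpr fun i => measurable_snd.comp (measurable_pi_apply i))
    have hXQ : Measure.map (fun ω => ((fun i => xr ω i ᵥ* Q), xs ω)) P
        = Measure.map (fun ω => (xr ω, xs ω)) P := by
      have e1 : (fun ω => ((fun i => xr ω i ᵥ* Q), xs ω))
          = (fun f : Fin n → (Fin kr → ℝ) × (Fin ks → ℝ) =>
              ((fun i => (f i).1), (fun i => (f i).2))) ∘ (fun ω i => (xr ω i ᵥ* Q, xs ω i)) := rfl
      have e2 : (fun ω => (xr ω, xs ω))
          = (fun f : Fin n → (Fin kr → ℝ) × (Fin ks → ℝ) =>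
              ((fun i => (f i).1), (fun i => (f i).2))) ∘ (fun ω i => (xr ω i, xs ω i)) := rfl
      rw [e1, e2, ← Measure.map_map humeas hXQ'meas, ← Measure.map_map humeas hYmeas, hmapTQ]
    have hgQ : Measurable (fun p : (Fin n → Fin kr → ℝ) × (Fin n → Fin ks → ℝ) =>
        ((fun i => p.1 i ᵥ* Q), p.2)) :=
      (measurable_pi_iff.mpr fun i => (measurable_vecMul_right Q).comp
        ((measurable_pi_apply i).comp measurable_fst)).prodMk measurable_snd
    have hXQmeas : Measurable (fun ω => ((fun i => xr ω i ᵥ* Q), xs ω)) := hgQ.comp hXmeas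
    have hindepQ : IndepFun (fun ω => ((fun i => xr ω i ᵥ* Q), xs ω)) W P :=
      hindep.comp hgQ measurable_id
    have hpair : Measure.map (fun ω => (((fun i => xr ω i ᵥ* Q), xs ω), W ω)) P
        = Measure.map (fun ω => ((xr ω, xs ω), W ω)) P := by
      rw [(indepFun_iff_map_prod_eq_prod_map_map hXQmeas.aemeasurable
            hWmeas.aemeasurable).mp hindepQ,
          (indepFun_iff_map_prod_eq_prod_map_map hXmeas.aemeasurable
            hWmeas.aemeasurable).mp hindep, hXQ]
    calc ∫ ω, F (((fun i => xr ω i ᵥ* Q), xs ω), W ω) ∂P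
        = ∫ p, F p ∂(Measure.map (fun ω => (((fun i => xr ω i ᵥ* Q), xs ω), W ω)) P) :=
          (integral_map (hXQmeas.prodMk hWmeas).aemeasurable hF.aestronglyMeasurable).symm
      _ = ∫ p, F p ∂(Measure.map (fun ω => ((xr ω, xs ω), W ω)) P) := by rw [hpair]
      _ = ∫ ω, F ((xr ω, xs ω), W ω) ∂P :=
          integral_map (hXmeas.prodMk hWmeas).aemeasurable hF.aestronglyMeasurable
  -- measurability of the building blocks
  have hφmeas' : Measurable fun q :
      ((Fin n → Fin kr → ℝ) × (Fin n → Fin ks → ℝ)) × (Fin n → Bool) => φ q.1.1 q.1.2 q.2 :=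
    hφmeas.comp ((measurable_fst.comp measurable_fst).prodMk
      ((measurable_snd.comp measurable_fst).prodMk measurable_snd))
  have hDrm : ∀ a : Fin kr, Measurable fun q :
      ((Fin n → Fin kr → ℝ) × (Fin n → Fin ks → ℝ)) × (Fin n → Bool) =>
      diffMeans n₁ q.1.1 q.2 a := fun a =>
    measurable_diffMeans_app n₁ Prod.fst measurable_fst a
  have hDsm : ∀ b : Fin ks, Measurable fun q :
      ((Fin n → Fin kr → ℝ) × (Fin n → Fin ks → ℝ)) × (Fin n → Bool) =>
      diffMeans n₁ q.1.2 q.2 b := fun b =>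
    measurable_diffMeans_app n₁ Prod.snd measurable_snd b
  have hunit : ∀ Q : Matrix (Fin kr) (Fin kr) ℝ, Q * Qᵀ = 1 → IsUnit Q := fun Q hQ =>
    (Matrix.isUnit_iff_isUnit_det Q).mpr (IsUnit.of_mul_eq_one (Qᵀ.det)
      (by rw [← Matrix.det_mul, hQ, Matrix.det_one]))
  have hφQ : ∀ Q : Matrix (Fin kr) (Fin kr) ℝ, Q * Qᵀ = 1 → ∀ ω,
      φ (fun i => xr ω i ᵥ* Q) (xs ω) (W ω) = φ (xr ω) (xs ω) (W ω) := by
    intro Q hQ ω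
    have h := hφaff Q (hunit Q hQ) 0 (xr ω) (xs ω) (W ω)
    simpa using h
  have hnegorth : (-1 : Matrix (Fin kr) (Fin kr) ℝ)
      * (-1 : Matrix (Fin kr) (Fin kr) ℝ)ᵀ = 1 := by
    simp
  -- (1a)
  have h1 : ∀ a : Fin kr, ∫ ω, Dr ω a * φ (xr ω) (xs ω) (W ω) ∂P = 0 := by
    intro a
    have hk := key (-1) hnegorth
      (fun q => diffMeans n₁ q.1.1 q.2 a * φ q.1.1 q.1.2 q.2) ((hDrm a).mul hφmeas')
    simp only at hk
    have hL : ∫ ω, diffMeans n₁ (fun i => xr ω i ᵥ* (-1)) (W ω) a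
        * φ (fun i => xr ω i ᵥ* (-1)) (xs ω) (W ω) ∂P
        = - ∫ ω, diffMeans n₁ (xr ω) (W ω) a * φ (xr ω) (xs ω) (W ω) ∂P := by
      rw [← integral_neg]
      refine integral_congr_ae (Filter.Eventually.of_forall fun ω => ?_)
      beta_reduce
      rw [diffMeans_vecMul, hφQ (-1) hnegorth ω]
      simp [Matrix.vecMul_neg, Matrix.vecMul_one]
    rw [hL] at hk
    have : ∫ ω, Dr ω a * φ (xr ω) (xs ω) (W ω) ∂P
        = ∫ ω, diffMeans n₁ (xr ω) (W ω) a * φ (xr ω) (xs ω) (W ω) ∂P := by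
      refine integral_congr_ae (Filter.Eventually.of_forall fun ω => ?_)
      beta_reduce
      rw [hDr ω]
    rw [this]
    linarith
  -- (1b)
  have h1b : ∀ a : Fin kr, ∫ ω, Dr ω a ∂P = 0 := by
    intro a
    have hk := key (-1) hnegorth (fun q => diffMeans n₁ q.1.1 q.2 a) (hDrm a)
    simp only at hk
    have hL : ∫ ω, diffMeans n₁ (fun i => xr ω i ᵥ* (-1)) (W ω) a ∂P
        = - ∫ ω, diffMeans n₁ (xr ω) (W ω) a ∂P := by
      rw [← integral_neg]
      refine integral_congr_ae (Filter.Eventually.of_forall fun ω => ?_)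
      beta_reduce
      rw [diffMeans_vecMul]
      simp [Matrix.vecMul_neg, Matrix.vecMul_one]
    rw [hL] at hk
    have : ∫ ω, Dr ω a ∂P = ∫ ω, diffMeans n₁ (xr ω) (W ω) a ∂P := by
      refine integral_congr_ae (Filter.Eventually.of_forall fun ω => ?_)
      beta_reduce
      rw [hDr ω]
    rw [this]
    linarith
  -- (2)
  have h2 : ∀ (b : Fin ks) (a : Fin kr),
      ∫ ω, Ds ω b * Dr ω a * φ (xr ω) (xs ω) (W ω) ∂P = 0 := by
    intro b a
    have hk := key (-1) hnegorth
      (fun q => diffMeans n₁ q.1.2 q.2 b * diffMeans n₁ q.1.1 q.2 a * φ q.1.1 q.1.2 q.2)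
      (((hDsm b).mul (hDrm a)).mul hφmeas')
    simp only at hk
    have hL : ∫ ω, diffMeans n₁ (xs ω) (W ω) b * diffMeans n₁ (fun i => xr ω i ᵥ* (-1)) (W ω) a
        * φ (fun i => xr ω i ᵥ* (-1)) (xs ω) (W ω) ∂P
        = - ∫ ω, diffMeans n₁ (xs ω) (W ω) b * diffMeans n₁ (xr ω) (W ω) a
            * φ (xr ω) (xs ω) (W ω) ∂P := by
      rw [← integral_neg]
      refine integral_congr_ae (Filter.Eventually.of_forall fun ω => ?_)
      beta_reduce
      rw [diffMeans_vecMul, hφQ (-1) hnegorth ω]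
      simp [Matrix.vecMul_neg, Matrix.vecMul_one]
    rw [hL] at hk
    have : ∫ ω, Ds ω b * Dr ω a * φ (xr ω) (xs ω) (W ω) ∂P
        = ∫ ω, diffMeans n₁ (xs ω) (W ω) b * diffMeans n₁ (xr ω) (W ω) a
            * φ (xr ω) (xs ω) (W ω) ∂P := by
      refine integral_congr_ae (Filter.Eventually.of_forall fun ω => ?_)
      beta_reduce
      rw [hDr ω, hDs ω]
    rw [this]
    linarith
  -- (3) off-diagonal
  have hoff : ∀ (a b : Fin kr), a ≠ b →
      ∫ ω, Dr ω a * Dr ω b * φ (xr ω) (xs ω) (W ω) ∂P = 0 := by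
    intro a b hab
    have horth := flipMat_orth a
    have hk := key _ horth
      (fun q => diffMeans n₁ q.1.1 q.2 a * diffMeans n₁ q.1.1 q.2 b * φ q.1.1 q.1.2 q.2)
      (((hDrm a).mul (hDrm b)).mul hφmeas')
    simp only at hk
    have hL : ∫ ω, diffMeans n₁
          (fun i => xr ω i ᵥ* Matrix.diagonal (fun j => if j = a then (-1:ℝ) else 1)) (W ω) a
        * diffMeans n₁
          (fun i => xr ω i ᵥ* Matrix.diagonal (fun j => if j = a then (-1:ℝ) else 1)) (W ω) b
        * φ (fun i => xr ω i ᵥ* Matrix.diagonal (fun j => if j = a then (-1:ℝ) else 1))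
            (xs ω) (W ω) ∂P
        = - ∫ ω, diffMeans n₁ (xr ω) (W ω) a * diffMeans n₁ (xr ω) (W ω) b
            * φ (xr ω) (xs ω) (W ω) ∂P := by
      rw [← integral_neg]
      refine integral_congr_ae (Filter.Eventually.of_forall fun ω => ?_)
      beta_reduce
      rw [diffMeans_vecMul, hφQ _ horth ω]
      simp [Matrix.vecMul_diagonal, (show ¬ b = a from fun h => hab h.symm)]
    rw [hL] at hk
    have : ∫ ω, Dr ω a * Dr ω b * φ (xr ω) (xs ω) (W ω) ∂P
        = ∫ ω, diffMeans n₁ (xr ω) (W ω) a * diffMeans n₁ (xr ω) (W ω) b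
            * φ (xr ω) (xs ω) (W ω) ∂P := by
      refine integral_congr_ae (Filter.Eventually.of_forall fun ω => ?_)
      beta_reduce
      rw [hDr ω]
    rw [this]
    linarith
  refine ⟨fun a => ⟨by rw [h1 a, zero_div], h1b a⟩,
    fun b a => by rw [h2 b a, zero_div], ?_⟩
  -- (3) diagonal
  by_cases hkr : kr = 0
  · exact ⟨0, le_refl 0, fun a => absurd a.isLt (by omega)⟩
  have hkr' : 0 < kr := Nat.pos_of_ne_zero hkr
  set a₀ : Fin kr := ⟨0, hkr'⟩ with ha₀
  have hdiag : ∀ a : Fin kr,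
      ∫ ω, Dr ω a * Dr ω a * φ (xr ω) (xs ω) (W ω) ∂P
      = ∫ ω, Dr ω a₀ * Dr ω a₀ * φ (xr ω) (xs ω) (W ω) ∂P := by
    intro a
    have horth := permMat_orth (Equiv.swap a a₀)
    have hk := key _ horth
      (fun q => diffMeans n₁ q.1.1 q.2 a * diffMeans n₁ q.1.1 q.2 a * φ q.1.1 q.1.2 q.2)
      (((hDrm a).mul (hDrm a)).mul hφmeas')
    simp only at hk
    have hL : ∫ ω, diffMeans n₁ (fun i => xr ω i ᵥ* permMat (Equiv.swap a a₀)) (W ω) a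
        * diffMeans n₁ (fun i => xr ω i ᵥ* permMat (Equiv.swap a a₀)) (W ω) a
        * φ (fun i => xr ω i ᵥ* permMat (Equiv.swap a a₀)) (xs ω) (W ω) ∂P
        = ∫ ω, Dr ω a₀ * Dr ω a₀ * φ (xr ω) (xs ω) (W ω) ∂P := by
      refine integral_congr_ae (Filter.Eventually.of_forall fun ω => ?_)
      beta_reduce
      rw [diffMeans_vecMul, hφQ _ horth ω, hDr ω]
      rw [vecMul_permMat, Equiv.symm_swap, Equiv.swap_apply_left]
    have hR : ∫ ω, diffMeans n₁ (xr ω) (W ω) a * diffMeans n₁ (xr ω) (W ω) a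
        * φ (xr ω) (xs ω) (W ω) ∂P
        = ∫ ω, Dr ω a * Dr ω a * φ (xr ω) (xs ω) (W ω) ∂P := by
      refine integral_congr_ae (Filter.Eventually.of_forall fun ω => ?_)
      beta_reduce
      rw [hDr ω]
    rw [hL, hR] at hk
    exact hk.symm
  refine ⟨(∫ ω, Dr ω a₀ * Dr ω a₀ * φ (xr ω) (xs ω) (W ω) ∂P)
      / (∫ ω, φ (xr ω) (xs ω) (W ω) ∂P), ?_, fun a b => ?_⟩
  · exact div_nonneg (integral_nonneg fun ω =>
      mul_nonneg (mul_self_nonneg _) (hφ01 _ _ _).1) hacc.le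
  · by_cases hab : a = b
    · subst hab
      rw [if_pos rfl, hdiag a]
    · rw [if_neg hab, hoff a b hab, zero_div]
end

section
/- Let (Ω, F, P) be a probability space, let h_1, …, h_M : Ω → ℝ be integrable score functions, and let φ ∈ C₀. If there exist positive constants π_1, …, π_M and α ∈ ℝ such that φ(ω) = 1 whenever Σ_{m=1}^M π_m·h_m(ω) < α and φ(ω) = 0 whenever Σ_{m=1}^M π_m·h_m(ω) > α, then φ is admissible. -/
/-!
Put `g = ∑ m, π m * h m`. Averaging the domination inequalities with the weights `π m`, a
criterion `φ'` dominating `φ` would satisfy `E[g ∣ φ'] < E[g ∣ φ]`. But, as in the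
Neyman–Pearson lemma, `φ` minimises `E[(g - α) ψ]` over all `ψ : Ω → [0,1]`. Comparing with
`ψ = 0` gives `E[g ∣ φ] ≤ α`, and comparing with `ψ = φ'`, whose acceptance probability is at
least that of `φ`, then gives `E[g ∣ φ] ≤ E[g ∣ φ']`.
-/

open MeasureTheory

/-- The average score of `h` on samples accepted by the stochastic criterion `φ`:
`E[h ∣ φ] = E[h·φ]/E[φ]`. -/
noncomputable def condScore {Ω : Type*} [MeasurableSpace Ω] (P : Measure Ω)
    (h φ : Ω → ℝ) : ℝ :=
  (∫ ω, h ω * φ ω ∂P) / (∫ ω, φ ω ∂P)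

/-- `φ ∈ C₀`: a measurable function `Ω → [0,1]` with positive acceptance probability. -/
def IsCriterion {Ω : Type*} [MeasurableSpace Ω] (P : Measure Ω) (φ : Ω → ℝ) : Prop :=
  Measurable φ ∧ (∀ ω, φ ω ∈ Set.Icc (0 : ℝ) 1) ∧ 0 < ∫ ω, φ ω ∂P

/-- `φ' ∈ C₀` dominates `φ` with respect to the scores `h_1, …, h_M`: it has at least the
acceptance probability of `φ`, no larger average score on accepted samples for every `m`,
and a strictly smaller one for at least one `m`. -/
def Dominates {Ω : Type*} [MeasurableSpace Ω] (P : Measure Ω) {M : ℕ}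
    (h : Fin M → Ω → ℝ) (φ' φ : Ω → ℝ) : Prop :=
  IsCriterion P φ' ∧ (∫ ω, φ ω ∂P) ≤ (∫ ω, φ' ω ∂P) ∧
    (∀ m, condScore P (h m) φ' ≤ condScore P (h m) φ) ∧
    (∃ m, condScore P (h m) φ' < condScore P (h m) φ)

section Criteria

variable {Ω : Type*} [MeasurableSpace Ω] {P : Measure Ω}

lemma IsCriterion.integrable {φ : Ω → ℝ} (hφ : IsCriterion P φ) : Integrable φ P :=
  Integrable.of_integral_ne_zero hφ.2.2.ne'

lemma MeasureTheory.Integrable.mul_isCriterion {f φ : Ω → ℝ} (hf : Integrable f P)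
    (hφ : IsCriterion P φ) : Integrable (fun ω => f ω * φ ω) P :=
  hf.mul_bdd hφ.1.aestronglyMeasurable (c := 1) <| .of_forall fun ω => by
    rw [Real.norm_eq_abs, abs_le]
    exact ⟨by linarith [(hφ.2.1 ω).1], (hφ.2.1 ω).2⟩

lemma condScore_sum_mul {ι : Type*} [Fintype ι] (c : ι → ℝ) (h : ι → Ω → ℝ) {ψ : Ω → ℝ}
    (hint : ∀ i, Integrable (fun ω => h i ω * ψ ω) P) :
    condScore P (fun ω => ∑ i, c i * h i ω) ψ = ∑ i, c i * condScore P (h i) ψ := by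
  simp only [condScore, Finset.sum_mul, mul_assoc]
  rw [integral_finsetSum _ fun i _ => (hint i).const_mul (c i), Finset.sum_div]
  simp only [integral_const_mul, mul_div_assoc]

lemma sub_mul_le_sub_mul_of_threshold {x α p q : ℝ} (h1 : x < α → p = 1) (h0 : α < x → p = 0)
    (hq : q ∈ Set.Icc (0 : ℝ) 1) : (x - α) * p ≤ (x - α) * q := by
  rcases lt_trichotomy x α with hlt | rfl | hgt
  · rw [h1 hlt]; nlinarith [hq.2]
  · simp
  · rw [h0 hgt]; nlinarith [hq.1]

lemma integral_mul_sub_le_of_threshold {g φ ψ : Ω → ℝ} {α : ℝ}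
    (hgφ : Integrable (fun ω => g ω * φ ω) P) (hφ : Integrable φ P)
    (hgψ : Integrable (fun ω => g ω * ψ ω) P) (hψ : Integrable ψ P)
    (h1 : ∀ ω, g ω < α → φ ω = 1) (h0 : ∀ ω, α < g ω → φ ω = 0)
    (hψ01 : ∀ ω, ψ ω ∈ Set.Icc (0 : ℝ) 1) :
    (∫ ω, g ω * φ ω ∂P) - α * ∫ ω, φ ω ∂P ≤ (∫ ω, g ω * ψ ω ∂P) - α * ∫ ω, ψ ω ∂P := by
  rw [← integral_const_mul, ← integral_const_mul, ← integral_sub hgφ (hφ.const_mul α),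
    ← integral_sub hgψ (hψ.const_mul α)]
  refine integral_mono (hgφ.sub (hφ.const_mul α)) (hgψ.sub (hψ.const_mul α)) fun ω => ?_
  simpa only [sub_mul, mul_comm α] using
    sub_mul_le_sub_mul_of_threshold (h1 ω) (h0 ω) (hψ01 ω)

lemma div_le_div_of_sub_mul_le {a a' b b' α : ℝ} (ha : 0 < a) (haa' : a ≤ a')
    (hb : b - α * a ≤ 0) (hbb' : b - α * a ≤ b' - α * a') : b / a ≤ b' / a' := by
  rw [div_le_div_iff₀ ha (ha.trans_le haa')]
  nlinarith [mul_le_mul_of_nonneg_right hb (sub_nonneg.mpr haa')]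

theorem condScore_le_of_threshold {g φ ψ : Ω → ℝ} {α : ℝ} (hg : Integrable g P)
    (hφ : IsCriterion P φ) (hψ : IsCriterion P ψ)
    (h1 : ∀ ω, g ω < α → φ ω = 1) (h0 : ∀ ω, α < g ω → φ ω = 0)
    (hle : ∫ ω, φ ω ∂P ≤ ∫ ω, ψ ω ∂P) : condScore P g φ ≤ condScore P g ψ := by
  have minimal (χ : Ω → ℝ) (hgχ : Integrable (fun ω => g ω * χ ω) P) (hχ : Integrable χ P)
      (hχ01 : ∀ ω, χ ω ∈ Set.Icc (0 : ℝ) 1) :=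
    integral_mul_sub_le_of_threshold (hg.mul_isCriterion hφ) hφ.integrable hgχ hχ h1 h0 hχ01
  have below_level := minimal 0 (by simp) (integrable_zero _ _ _) fun _ => by simp
  simp only [Pi.zero_apply, mul_zero, integral_zero, sub_zero] at below_level
  exact div_le_div_of_sub_mul_le hφ.2.2 hle below_level
    (minimal ψ (hg.mul_isCriterion hψ) hψ.integrable hψ.2.1)

end Criteria

theorem stmt_8_general {Ω : Type*} [MeasurableSpace Ω] (P : Measure Ω)
    {M : ℕ} (h : Fin M → Ω → ℝ) (hint : ∀ m, Integrable (h m) P)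
    (φ : Ω → ℝ) (hφ : IsCriterion P φ)
    (π : Fin M → ℝ) (hπ : ∀ m, 0 < π m) (α : ℝ)
    (h1 : ∀ ω, (∑ m, π m * h m ω) < α → φ ω = 1)
    (h0 : ∀ ω, α < (∑ m, π m * h m ω) → φ ω = 0) :
    ¬ ∃ φ' : Ω → ℝ, Dominates P h φ' φ := by
  rintro ⟨φ', hφ', hle, hall, m₀, hlt⟩
  have hg : Integrable (fun ω => ∑ m, π m * h m ω) P :=
    integrable_finsetSum _ fun m _ => (hint m).const_mul (π m)
  have weighted : condScore P (fun ω => ∑ m, π m * h m ω) φ' <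
      condScore P (fun ω => ∑ m, π m * h m ω) φ := by
    rw [condScore_sum_mul π h fun m => (hint m).mul_isCriterion hφ',
      condScore_sum_mul π h fun m => (hint m).mul_isCriterion hφ]
    exact Finset.sum_lt_sum (fun m _ => mul_le_mul_of_nonneg_left (hall m) (hπ m).le)
      ⟨m₀, Finset.mem_univ m₀, mul_lt_mul_of_pos_left hlt (hπ m₀)⟩
  exact weighted.not_ge (condScore_le_of_threshold hg hφ hφ' h1 h0 hle)

/-- sufficiency. If there are positive constants `π_1, …, π_M` and `α ∈ ℝ`
such that `φ = 1` whenever `∑ π_m h_m < α` and `φ = 0` whenever `∑ π_m h_m > α`, then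
`φ ∈ C₀` is admissible (no criterion in `C₀` dominates it). -/
theorem stmt_8 {Ω : Type*} [MeasurableSpace Ω] (P : Measure Ω) [IsProbabilityMeasure P]
    {M : ℕ} (h : Fin M → Ω → ℝ) (hint : ∀ m, Integrable (h m) P)
    (φ : Ω → ℝ) (hφ : IsCriterion P φ)
    (π : Fin M → ℝ) (hπ : ∀ m, 0 < π m) (α : ℝ)
    (h1 : ∀ ω, (∑ m, π m * h m ω) < α → φ ω = 1)
    (h0 : ∀ ω, α < (∑ m, π m * h m ω) → φ ω = 0) :
    ¬ ∃ φ' : Ω → ℝ, Dominates P h φ' φ :=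
  stmt_8_general P h hint φ hφ π hπ α h1 h0
end

section
/- Let (Ω, F, P) be a probability space, h : Ω → ℝ integrable, and a ∈ ℝ. Suppose φ ∈ C₀ satisfies φ(ω) = 1 whenever h(ω) < a and φ(ω) = 0 whenever h(ω) > a, and let φ' ∈ C₀ satisfy E[φ'] ≥ E[φ]. Then ∫ (a − h)(φ − φ') dP ≥ 0, and consequently E[h | φ] ≤ E[h | φ'], i.e., E[h·φ]/E[φ] ≤ E[h·φ']/E[φ']. -/
open MeasureTheory

/-!
Pointwise, `(a - h) (φ - φ') ≥ 0`: where `h < a` we have `φ = 1 ≥ φ'`, and where `h > a` we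
have `φ = 0 ≤ φ'`. Integrating gives `E[h φ'] - E[h φ] ≥ a (E[φ'] - E[φ])`. Since `φ` only
accepts samples with `h ≤ a`, also `E[h φ] ≤ a E[φ]`, so the extra mass `E[φ'] - E[φ] ≥ 0`
that `φ'` accepts is scored at least `a ≥ E[h | φ]`, which can only raise the average.
-/

section Threshold

variable {x a p q : ℝ}

lemma threshold_mul_sub_nonneg (h1 : x < a → p = 1) (h0 : a < x → p = 0)
    (hq : q ∈ Set.Icc (0 : ℝ) 1) : 0 ≤ (a - x) * (p - q) := by
  rcases lt_trichotomy x a with hlt | rfl | hgt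
  · rw [h1 hlt]
    exact mul_nonneg (by linarith) (by linarith [hq.2])
  · simp
  · rw [h0 hgt]
    exact mul_nonneg_of_nonpos_of_nonpos (by linarith) (by linarith [hq.1])

lemma threshold_mul_le (hp : 0 ≤ p) (h0 : a < x → p = 0) : x * p ≤ a * p := by
  rcases le_or_gt x a with hle | hgt
  · exact mul_le_mul_of_nonneg_right hle hp
  · simp [h0 hgt]

end Threshold

lemma div_le_div_of_le_mul_of_sub_le {A A' B B' a : ℝ} (hA : 0 < A) (hAA' : A ≤ A')
    (hB : B ≤ a * A) (hB' : B - B' ≤ a * (A - A')) : B / A ≤ B' / A' := by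
  rw [div_le_div_iff₀ hA (hA.trans_le hAA')]
  nlinarith

section Integral

variable {Ω : Type*} [MeasurableSpace Ω] {μ : Measure Ω} {h φ φ' : Ω → ℝ}

lemma integrable_mul_of_mem_Icc (hh : Integrable h μ) (hφ : Integrable φ μ)
    (hφ01 : ∀ ω, φ ω ∈ Set.Icc (0 : ℝ) 1) : Integrable (fun ω => h ω * φ ω) μ :=
  hh.mul_bdd hφ.aestronglyMeasurable <| ae_of_all _ fun ω => by
    rw [Real.norm_eq_abs, abs_le]
    exact ⟨by linarith [(hφ01 ω).1], (hφ01 ω).2⟩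

lemma integral_sub_mul_sub (a : ℝ) (hφ : Integrable φ μ) (hφ' : Integrable φ' μ)
    (hhφ : Integrable (fun ω => h ω * φ ω) μ) (hhφ' : Integrable (fun ω => h ω * φ' ω) μ) :
    ∫ ω, (a - h ω) * (φ ω - φ' ω) ∂μ
      = a * (∫ ω, φ ω ∂μ - ∫ ω, φ' ω ∂μ) - (∫ ω, h ω * φ ω ∂μ - ∫ ω, h ω * φ' ω ∂μ) := by
  have hexpand : (fun ω => (a - h ω) * (φ ω - φ' ω))
      = fun ω => a * (φ ω - φ' ω) - (h ω * φ ω - h ω * φ' ω) := by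
    funext ω; ring
  have hsub : Integrable (fun ω => φ ω - φ' ω) μ := hφ.sub hφ'
  have hhsub : Integrable (fun ω => h ω * φ ω - h ω * φ' ω) μ := hhφ.sub hhφ'
  rw [hexpand, integral_sub (hsub.const_mul a) hhsub, integral_const_mul,
    integral_sub hφ hφ', integral_sub hhφ hhφ']

lemma integral_mul_le_mul_integral_of_threshold {a : ℝ} (hφ : Integrable φ μ)
    (hhφ : Integrable (fun ω => h ω * φ ω) μ) (hφ0 : ∀ ω, 0 ≤ φ ω)
    (h0 : ∀ ω, a < h ω → φ ω = 0) : ∫ ω, h ω * φ ω ∂μ ≤ a * ∫ ω, φ ω ∂μ := by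
  rw [← integral_const_mul]
  exact integral_mono hhφ (hφ.const_mul a) fun ω => threshold_mul_le (hφ0 ω) (h0 ω)

end Integral

theorem stmt_12_general {Ω : Type*} [MeasurableSpace Ω] (P : Measure Ω)
    (h : Ω → ℝ) (hh : Integrable h P) (a : ℝ)
    (φ φ' : Ω → ℝ)
    (hφ01 : ∀ ω, φ ω ∈ Set.Icc (0 : ℝ) 1) (hφ'01 : ∀ ω, φ' ω ∈ Set.Icc (0 : ℝ) 1)
    (hφpos : 0 < ∫ ω, φ ω ∂P)
    (h1 : ∀ ω, h ω < a → φ ω = 1) (h0 : ∀ ω, a < h ω → φ ω = 0)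
    (hge : ∫ ω, φ ω ∂P ≤ ∫ ω, φ' ω ∂P) :
    0 ≤ ∫ ω, (a - h ω) * (φ ω - φ' ω) ∂P ∧
    (∫ ω, h ω * φ ω ∂P) / (∫ ω, φ ω ∂P) ≤ (∫ ω, h ω * φ' ω ∂P) / (∫ ω, φ' ω ∂P) := by
  have hφ : Integrable φ P := .of_integral_ne_zero hφpos.ne'
  have hφ' : Integrable φ' P := .of_integral_ne_zero (hφpos.trans_le hge).ne'
  have hhφ := integrable_mul_of_mem_Icc hh hφ hφ01
  have hhφ' := integrable_mul_of_mem_Icc hh hφ' hφ'01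
  have hgap : 0 ≤ ∫ ω, (a - h ω) * (φ ω - φ' ω) ∂P :=
    integral_nonneg fun ω => threshold_mul_sub_nonneg (h1 ω) (h0 ω) (hφ'01 ω)
  refine ⟨hgap, div_le_div_of_le_mul_of_sub_le hφpos hge
    (integral_mul_le_mul_integral_of_threshold hφ hhφ (fun ω => (hφ01 ω).1) h0) ?_⟩
  rw [integral_sub_mul_sub a hφ hφ' hhφ hhφ'] at hgap
  linarith

/-- a threshold criterion `φ` (accept when `h < a`, reject when `h > a`)
has the smallest conditional average score among criteria with at least its acceptance
probability. -/
theorem stmt_12 {Ω : Type*} [MeasurableSpace Ω] (P : Measure Ω) [IsProbabilityMeasure P]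
    (h : Ω → ℝ) (hh : Integrable h P) (a : ℝ)
    (φ φ' : Ω → ℝ) (hφm : Measurable φ) (hφ'm : Measurable φ')
    (hφ01 : ∀ ω, φ ω ∈ Set.Icc (0 : ℝ) 1) (hφ'01 : ∀ ω, φ' ω ∈ Set.Icc (0 : ℝ) 1)
    (hφpos : 0 < ∫ ω, φ ω ∂P) (hφ'pos : 0 < ∫ ω, φ' ω ∂P)
    (h1 : ∀ ω, h ω < a → φ ω = 1) (h0 : ∀ ω, a < h ω → φ ω = 0)
    (hge : ∫ ω, φ ω ∂P ≤ ∫ ω, φ' ω ∂P) :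
    0 ≤ ∫ ω, (a - h ω) * (φ ω - φ' ω) ∂P ∧
    (∫ ω, h ω * φ ω ∂P) / (∫ ω, φ ω ∂P) ≤ (∫ ω, h ω * φ' ω ∂P) / (∫ ω, φ' ω ∂P) :=
  stmt_12_general P h hh a φ φ' hφ01 hφ'01 hφpos h1 h0 hge
end
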